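/- arXiv:1511.02368 — 3 statements merged into one kernel-verified Lean document; each statement's English description precedes it below -/
import Mathlib

section
/- Let A, B ∈ Mₙ(ℝ). The Sylvester operator X ↦ A·X + X·B on Mₙ(ℝ) is invertible if and only if for all eigenvalues λ of A and μ of B (over ℂ), λ + μ ≠ 0. -/
/-!
If `A v = λ v` and `wᵀ B = μ wᵀ` with `λ + μ = 0`, the rank-one matrix `v wᵀ` is a nonzero
solution of `A X + X B = 0`. Conversely, a solution `X` intertwines `A` and `-B`, so
`p(A) X = X p(-B) = 0` for the characteristic polynomial `p` of `-B`; by spectral mapping `p(A)` is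
invertible unless some eigenvalue of `A` is a root of `p`, i.e. the negative of an eigenvalue
of `B`. Over `ℝ` the operator is injective exactly when its complexification is, because the real
and imaginary parts of a complex solution are real solutions.
-/

open Matrix
open scoped Polynomial

variable {K : Type*} [Field K] {ι : Type*} [Fintype ι] [DecidableEq ι]

def sylvesterMap (A B : Matrix ι ι K) : Matrix ι ι K →ₗ[K] Matrix ι ι K :=
  LinearMap.mulLeft K A + LinearMap.mulRight K B

@[simp]
lemma sylvesterMap_apply (A B X : Matrix ι ι K) : sylvesterMap A B X = A * X + X * B := rfl

lemma sylvesterMap_bijective_iff_injective (A B : Matrix ι ι K) :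
    Function.Bijective (sylvesterMap A B) ↔ Function.Injective (sylvesterMap A B) :=
  ⟨(·.1), fun h ↦ ⟨h, LinearMap.injective_iff_surjective.mp h⟩⟩

lemma SemiconjBy.aeval {R S : Type*} [CommSemiring R] [Semiring S] [Algebra R S] {x a b : S}
    (h : SemiconjBy x b a) (p : R[X]) :
    SemiconjBy x (Polynomial.aeval b p) (Polynomial.aeval a p) := by
  induction p using Polynomial.induction_on' with
  | add p q hp hq => simpa only [map_add] using hp.add_right hq
  | monomial k c =>
    simpa only [Polynomial.aeval_monomial] using
      (Algebra.commute_algebraMap_right c x).semiconjBy.mul_right (h.pow_right k)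

lemma Matrix.exists_mulVec_eq_smul_of_mem_spectrum {A : Matrix ι ι K} {μ : K}
    (hμ : μ ∈ spectrum K A) : ∃ v ≠ 0, A *ᵥ v = μ • v := by
  rw [← spectrum_toLin', ← Module.End.hasEigenvalue_iff_mem_spectrum] at hμ
  obtain ⟨v, hv, hv0⟩ := hμ.exists_hasEigenvector
  exact ⟨v, hv0, by simpa using Module.End.mem_eigenspace_iff.mp hv⟩

lemma Matrix.exists_vecMul_eq_smul_of_mem_spectrum {A : Matrix ι ι K} {μ : K}
    (hμ : μ ∈ spectrum K A) : ∃ v ≠ 0, v ᵥ* A = μ • v := by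
  rw [mem_spectrum_iff_isRoot_charpoly, ← charpoly_transpose,
    ← mem_spectrum_iff_isRoot_charpoly] at hμ
  simpa only [mulVec_transpose] using exists_mulVec_eq_smul_of_mem_spectrum hμ

lemma not_injective_sylvesterMap_of_add_eq_zero {A B : Matrix ι ι K} {μ ν : K}
    (hμ : μ ∈ spectrum K A) (hν : ν ∈ spectrum K B) (h : μ + ν = 0) :
    ¬ Function.Injective (sylvesterMap A B) := by
  obtain ⟨v, hv0, hv⟩ := exists_mulVec_eq_smul_of_mem_spectrum hμ
  obtain ⟨w, hw0, hw⟩ := exists_vecMul_eq_smul_of_mem_spectrum hν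
  intro hinj
  apply vecMulVec_ne_zero hv0 hw0
  apply (injective_iff_map_eq_zero _).mp hinj
  rw [sylvesterMap_apply, mul_vecMulVec, vecMulVec_mul, hv, hw, smul_vecMulVec, vecMulVec_smul,
    ← add_smul, h, zero_smul]

lemma sylvesterMap_injective [IsAlgClosed K] {A B : Matrix ι ι K}
    (h : ∀ μ ∈ spectrum K A, ∀ ν ∈ spectrum K B, μ + ν ≠ 0) :
    Function.Injective (sylvesterMap A B) := by
  rcases isEmpty_or_nonempty ι with hι | hι
  · exact Function.injective_of_subsingleton _
  rw [injective_iff_map_eq_zero]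
  intro X hX
  set p := (-B).charpoly
  have hp : 0 < p.degree := by
    rw [charpoly_degree_eq_dim]
    exact_mod_cast Fintype.card_pos
  have hunit : IsUnit (Polynomial.aeval A p) := by
    rw [← spectrum.zero_notMem_iff K, spectrum.map_polynomial_aeval_of_degree_pos A p hp]
    rintro ⟨μ, hμ, hpμ⟩
    have hμB : μ ∈ -spectrum K B := by
      rw [spectrum.neg_eq, mem_spectrum_iff_isRoot_charpoly]
      exact hpμ
    exact h μ hμ (-μ) hμB (add_neg_cancel μ)
  have hsemi : SemiconjBy X (-B) A := by
    rw [SemiconjBy, mul_neg, neg_eq_iff_add_eq_zero, add_comm]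
    exact hX
  have hpX : Polynomial.aeval A p * X = 0 := by
    rw [← (hsemi.aeval p).eq, aeval_self_charpoly, mul_zero]
  exact hunit.mul_right_eq_zero.mp hpX

theorem sylvesterMap_injective_iff [IsAlgClosed K] (A B : Matrix ι ι K) :
    Function.Injective (sylvesterMap A B) ↔
      ∀ μ ∈ spectrum K A, ∀ ν ∈ spectrum K B, μ + ν ≠ 0 :=
  ⟨fun h _ hμ _ hν hμν ↦ not_injective_sylvesterMap_of_add_eq_zero hμ hν hμν h,
    sylvesterMap_injective⟩

lemma map_sylvesterMap_algebraMap (A B X : Matrix ι ι ℝ) :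
    (sylvesterMap A B X).map (algebraMap ℝ ℂ) =
      sylvesterMap (A.map (algebraMap ℝ ℂ)) (B.map (algebraMap ℝ ℂ))
        (X.map (algebraMap ℝ ℂ)) := by
  simp only [sylvesterMap_apply, ← RingHom.mapMatrix_apply, map_add, map_mul]

lemma map_linearMap_sylvesterMap_algebraMap (f : ℂ →ₗ[ℝ] ℝ) (A B : Matrix ι ι ℝ)
    (Z : Matrix ι ι ℂ) :
    (sylvesterMap (A.map (algebraMap ℝ ℂ)) (B.map (algebraMap ℝ ℂ)) Z).map f =
      sylvesterMap A B (Z.map f) := by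
  have hf (a : ℝ) (z : ℂ) : f (a * z) = a * f z := by
    rw [← Complex.real_smul, map_smul, smul_eq_mul]
  ext i j
  simp [mul_apply, mul_comm _ (Complex.ofReal _), hf, mul_comm _ (f _)]

lemma sylvesterMap_map_algebraMap_injective_iff (A B : Matrix ι ι ℝ) :
    Function.Injective (sylvesterMap (A.map (algebraMap ℝ ℂ)) (B.map (algebraMap ℝ ℂ))) ↔
      Function.Injective (sylvesterMap A B) := by
  simp only [injective_iff_map_eq_zero]
  constructor
  · intro h X hX
    have hXℂ := h (X.map (algebraMap ℝ ℂ)) (by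
      rw [← map_sylvesterMap_algebraMap, hX]; simp)
    exact map_injective (algebraMap ℝ ℂ).injective (by simpa using hXℂ)
  · intro h Z hZ
    have hre := h (Z.map Complex.reLm) (by
      rw [← map_linearMap_sylvesterMap_algebraMap, hZ]; simp)
    have him := h (Z.map Complex.imLm) (by
      rw [← map_linearMap_sylvesterMap_algebraMap, hZ]; simp)
    ext i j
    exact Complex.ext (congrFun₂ hre i j) (congrFun₂ him i j)

theorem stmt_3 (n : ℕ) (A B : Matrix (Fin n) (Fin n) ℝ) :
    Function.Bijective (fun X : Matrix (Fin n) (Fin n) ℝ => A * X + X * B) ↔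
    ∀ lam ∈ spectrum ℂ (A.map (algebraMap ℝ ℂ)),
      ∀ mu ∈ spectrum ℂ (B.map (algebraMap ℝ ℂ)), lam + mu ≠ 0 := by
  change Function.Bijective (sylvesterMap A B) ↔ _
  rw [sylvesterMap_bijective_iff_injective, ← sylvesterMap_map_algebraMap_injective_iff,
    sylvesterMap_injective_iff]
end

section
/- Let A, B ∈ Mₙ(ℂ) and let φ(x,y) = Σ_{j,k} α_{j,k} x^j y^k be a polynomial in two variables. The linear operator G : Mₙ(ℂ) → Mₙ(ℂ) defined by G(X) = Σ_{j,k} α_{j,k} A^j X B^k is singular (non-invertible) if and only if φ(λ, μ) = 0 for some eigenvalue λ of A and some eigenvalue μ of Bᵀ. -/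
/-!
`G` is `φ(L_A, R_B)` for the commuting operators `L_A X = A X` and `R_B X = X B`, so on any
`X ≠ 0` with `A X = λ X` and `X B = μ X` it acts as multiplication by `φ(λ, μ)`. Such `X` exist
exactly when `λ ∈ σ(A)` and `μ ∈ σ(Bᵀ)`: take `X = u vᵀ` for eigenvectors `u` of `A` and `v`
of `Bᵀ`. This gives singularity when `φ(λ, μ) = 0`. Conversely, `ker G` is invariant under
`L_A` and `R_B`, so if it is nontrivial it contains a common eigenvector `X` of both, and
`G X = 0` forces `φ(λ, μ) = 0`.
-/

open Matrix

namespace Module.End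

variable {K V : Type*} [Field K] [IsAlgClosed K] [AddCommGroup V] [Module K V]
  [FiniteDimensional K V]

theorem exists_eigenvector_of_commute [Nontrivial V] {f g : End K V} (hfg : Commute f g) :
    ∃ v ≠ 0, ∃ a b : K, f v = a • v ∧ g v = b • v := by
  obtain ⟨a, ha⟩ := exists_eigenvalue f
  have hg : ∀ v ∈ f.eigenspace a, g v ∈ f.eigenspace a :=
    fun v hv => mapsTo_genEigenspace_of_comm hfg a 1 hv
  have : Nontrivial (f.eigenspace a) := Submodule.nontrivial_iff_ne_bot.mpr ha
  obtain ⟨b, hb⟩ := exists_eigenvalue (g.restrict hg)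
  obtain ⟨w, hw⟩ := hb.exists_hasEigenvector
  exact ⟨w, by simpa using hw.2, a, b, mem_eigenspace_iff.mp w.2,
    congrArg Subtype.val hw.apply_eq_smul⟩

theorem exists_eigenvector_mem_of_commute {f g : End K V} (hfg : Commute f g)
    {W : Submodule K V} (hW : W ≠ ⊥) (hfW : ∀ v ∈ W, f v ∈ W) (hgW : ∀ v ∈ W, g v ∈ W) :
    ∃ v ∈ W, v ≠ 0 ∧ ∃ a b : K, f v = a • v ∧ g v = b • v := by
  have : Nontrivial W := Submodule.nontrivial_iff_ne_bot.mpr hW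
  obtain ⟨w, hw, a, b, hf, hg⟩ :=
    exists_eigenvector_of_commute (LinearMap.restrict_commute hfg hfW hgW)
  exact ⟨w, w.2, by simpa using hw, a, b, congrArg Subtype.val hf, congrArg Subtype.val hg⟩

end Module.End

theorem LinearMap.map_mem_ker_of_commute {R M : Type*} [CommRing R] [AddCommGroup M] [Module R M]
    {f g : Module.End R M} (hfg : Commute f g) {v : M} (hv : v ∈ LinearMap.ker g) :
    f v ∈ LinearMap.ker g := by
  rw [LinearMap.mem_ker, ← Module.End.mul_apply, ← hfg.eq, Module.End.mul_apply,
    LinearMap.mem_ker.mp hv, map_zero]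

theorem spectrum.mem_of_mul_eq_smul {R 𝒜 : Type*} [CommSemiring R] [Ring 𝒜] [Algebra R 𝒜]
    {a x : 𝒜} {r : R} (hx : x ≠ 0) (h : a * x = r • x) : r ∈ spectrum R a := by
  rw [spectrum.mem_iff]
  intro hu
  refine hx (hu.mul_right_eq_zero.mp ?_)
  rw [sub_mul, Algebra.algebraMap_eq_smul_one, smul_mul_assoc, one_mul, h, sub_self]

namespace Matrix

variable {K n : Type*} [Field K] [Fintype n] [DecidableEq n]

theorem exists_mulVec_eq_smul_of_mem_spectrum_s4 {A : Matrix n n K} {r : K}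
    (h : r ∈ spectrum K A) : ∃ u ≠ 0, A *ᵥ u = r • u := by
  rw [← spectrum_toLin', ← Module.End.hasEigenvalue_iff_mem_spectrum] at h
  obtain ⟨u, hu⟩ := h.exists_hasEigenvector
  exact ⟨u, hu.2, by simpa using hu.apply_eq_smul⟩

theorem exists_ne_zero_mul_eq_smul_iff (A B : Matrix n n K) (a b : K) :
    (∃ X ≠ 0, A * X = a • X ∧ X * B = b • X) ↔ a ∈ spectrum K A ∧ b ∈ spectrum K Bᵀ := by
  constructor
  · rintro ⟨X, hX, hA, hB⟩
    refine ⟨spectrum.mem_of_mul_eq_smul hX hA,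
      spectrum.mem_of_mul_eq_smul (transpose_eq_zero.not.mpr hX) ?_⟩
    rw [← transpose_mul, hB, transpose_smul]
  · rintro ⟨ha, hb⟩
    obtain ⟨u, hu, hAu⟩ := exists_mulVec_eq_smul_of_mem_spectrum_s4 ha
    obtain ⟨v, hv, hBv⟩ := exists_mulVec_eq_smul_of_mem_spectrum_s4 hb
    rw [mulVec_transpose] at hBv
    exact ⟨vecMulVec u v, vecMulVec_ne_zero hu hv,
      by rw [mul_vecMulVec, hAu, smul_vecMulVec], by rw [vecMulVec_mul, hBv, vecMulVec_smul]⟩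

end Matrix

section PolyMulLeftRight

open LinearMap Finset

variable (R : Type*) {𝒜 : Type*} [CommRing R] [Ring 𝒜] [Algebra R 𝒜]

def polyMulLeftRight (a b : 𝒜) (p q : ℕ) (α : ℕ → ℕ → R) : Module.End R 𝒜 :=
  ∑ j ∈ range p, ∑ k ∈ range q, α j k • (mulLeft R a ^ j * mulRight R b ^ k)

variable {R} (a b : 𝒜) (p q : ℕ) (α : ℕ → ℕ → R)

theorem polyMulLeftRight_apply (x : 𝒜) :
    polyMulLeftRight R a b p q α x =
      ∑ j ∈ range p, ∑ k ∈ range q, α j k • (a ^ j * x * b ^ k) := by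
  simp only [polyMulLeftRight, LinearMap.coe_sum, Finset.sum_apply, LinearMap.smul_apply,
    Module.End.mul_apply, pow_mulLeft, pow_mulRight, mulLeft_apply, mulRight_apply, mul_assoc]

theorem commute_mulLeft_polyMulLeftRight :
    Commute (mulLeft R a) (polyMulLeftRight R a b p q α) :=
  .sum_right _ _ _ fun _ _ => .sum_right _ _ _ fun _ _ =>
    .smul_right (.mul_right (.pow_right (.refl _) _) (.pow_right (commute_mulLeft_right a b) _)) _

theorem commute_mulRight_polyMulLeftRight :
    Commute (mulRight R b) (polyMulLeftRight R a b p q α) :=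
  .sum_right _ _ _ fun _ _ => .sum_right _ _ _ fun _ _ =>
    .smul_right (.mul_right (.pow_right (commute_mulLeft_right a b).symm _)
      (.pow_right (.refl _) _)) _

theorem polyMulLeftRight_apply_of_mul_eq_smul {x : 𝒜} {r s : R} (ha : a * x = r • x)
    (hb : x * b = s • x) :
    polyMulLeftRight R a b p q α x =
      (∑ j ∈ range p, ∑ k ∈ range q, α j k * r ^ j * s ^ k) • x := by
  have hapow : ∀ j, a ^ j * x = r ^ j • x := by
    intro j
    induction j with
    | zero => simp
    | succ j ih => rw [pow_succ', mul_assoc, ih, mul_smul_comm, ha, smul_smul, ← pow_succ]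
  have hbpow : ∀ k, x * b ^ k = s ^ k • x := by
    intro k
    induction k with
    | zero => simp
    | succ k ih => rw [pow_succ, ← mul_assoc, ih, smul_mul_assoc, hb, smul_smul, ← pow_succ]
  have hpow : ∀ j k, a ^ j * x * b ^ k = (r ^ j * s ^ k) • x := fun j k => by
    rw [hapow, smul_mul_assoc, hbpow, smul_smul]
  simp only [polyMulLeftRight_apply, hpow, smul_smul, Finset.sum_smul, mul_assoc]

end PolyMulLeftRight

theorem stmt_4 (n p q : ℕ) (A B : Matrix (Fin n) (Fin n) ℂ)
    (α : ℕ → ℕ → ℂ)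
    (G : Matrix (Fin n) (Fin n) ℂ → Matrix (Fin n) (Fin n) ℂ)
    (hG : ∀ X, G X = ∑ j ∈ Finset.range p, ∑ k ∈ Finset.range q,
      α j k • (A ^ j * X * B ^ k)) :
    ¬ Function.Injective G ↔
      ∃ lam ∈ spectrum ℂ A, ∃ mu ∈ spectrum ℂ Bᵀ,
        ∑ j ∈ Finset.range p, ∑ k ∈ Finset.range q,
          α j k * lam ^ j * mu ^ k = 0 := by
  obtain rfl : G = polyMulLeftRight ℂ A B p q α := funext fun X => by
    rw [hG, polyMulLeftRight_apply]
  rw [← LinearMap.ker_eq_bot]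
  constructor
  · intro hker
    obtain ⟨X, hX, hX0, lam, mu, hA, hB⟩ :=
      Module.End.exists_eigenvector_mem_of_commute (LinearMap.commute_mulLeft_right A B) hker
        (fun _ => LinearMap.map_mem_ker_of_commute (commute_mulLeft_polyMulLeftRight A B p q α))
        (fun _ => LinearMap.map_mem_ker_of_commute (commute_mulRight_polyMulLeftRight A B p q α))
    have hspec := (exists_ne_zero_mul_eq_smul_iff A B lam mu).mp ⟨X, hX0, hA, hB⟩
    rw [LinearMap.mem_ker, polyMulLeftRight_apply_of_mul_eq_smul A B p q α hA hB] at hX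
    exact ⟨lam, hspec.1, mu, hspec.2, (smul_eq_zero.mp hX).resolve_right hX0⟩
  · rintro ⟨lam, hlam, mu, hmu, hphi⟩ hker
    obtain ⟨X, hX0, hA, hB⟩ := (exists_ne_zero_mul_eq_smul_iff A B lam mu).mpr ⟨hlam, hmu⟩
    refine hX0 (LinearMap.ker_eq_bot'.mp hker X ?_)
    rw [polyMulLeftRight_apply_of_mul_eq_smul A B p q α hA hB, hphi, zero_smul]
end

section
/- Let A, B, C be square matrices with A ∈ Mₘ(ℝ), B ∈ Mₙ(ℝ), C an m×n matrix. The Sylvester equation AX - XB = C has a solution X if and only if the block matrices [[A, C],[0, B]] and [[A, 0],[0, B]] are similar (Roth's removal rule). -/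
/-!
Flanders–Wimmer's proof of Roth's removal rule. If `A X - X B = C`, conjugating by
`[[1, X], [0, 1]]` clears the corner block. Conversely, put `M = [[A, C], [0, B]]` and
`N = [[A, 0], [0, B]]`. Similarity of `M` and `N` makes the solution spaces of `M Z = Z N` and
`N Z = Z N` equally large. The map sending `Z` to its bottom block row has the same kernel on both
spaces and sends the first into the image of the second, so a dimension count shows that the two
images coincide. The identity solves `N Z = Z N`, hence some `Z` with `M Z = Z N` has bottom row
`[0, 1]`, and the equation for its top-right block `Z₁₂` says that `X = -Z₁₂` solves
`A X - X B = C`.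
-/

open Module

theorem Submodule.finrank_map_add_finrank_inf_ker {K E F : Type*} [DivisionRing K]
    [AddCommGroup E] [Module K E] [FiniteDimensional K E] [AddCommGroup F] [Module K F]
    (f : E →ₗ[K] F) (V : Submodule K E) :
    finrank K (V.map f) + finrank K ↥(V ⊓ LinearMap.ker f) = finrank K V := by
  rw [← LinearMap.range_domRestrict, ← (f.domRestrict V).finrank_range_add_finrank_ker,
    LinearMap.ker_domRestrict, ← Submodule.map_comap_subtype,
    Submodule.finrank_map_subtype_eq]

theorem Submodule.map_eq_of_inf_ker_eq_of_finrank_eq {K E F : Type*} [DivisionRing K]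
    [AddCommGroup E] [Module K E] [FiniteDimensional K E] [AddCommGroup F] [Module K F]
    {f : E →ₗ[K] F} {V W : Submodule K E} (hker : V ⊓ LinearMap.ker f = W ⊓ LinearMap.ker f)
    (hle : V.map f ≤ W.map f) (hdim : finrank K V = finrank K W) : V.map f = W.map f := by
  refine Submodule.eq_of_le_of_finrank_eq hle ?_
  have hV := V.finrank_map_add_finrank_inf_ker f
  have hW := W.finrank_map_add_finrank_inf_ker f
  rw [hker] at hV
  omega

namespace Matrix

variable {K : Type*} [Field K] {ι κ p q : Type*} [Fintype ι] [Fintype κ] [Fintype p] [Fintype q]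

def intertwiners (M : Matrix p p K) (N : Matrix q q K) : Submodule K (Matrix p q K) :=
  LinearMap.ker (mulLeftLinearMap q K M - mulRightLinearMap p K N)

theorem mem_intertwiners {M : Matrix p p K} {N : Matrix q q K} {Z : Matrix p q K} :
    Z ∈ intertwiners M N ↔ M * Z = Z * N := by
  simp [intertwiners, sub_eq_zero]

theorem finrank_intertwiners_units_conj [DecidableEq p] (S : (Matrix p p K)ˣ) (M : Matrix p p K)
    (N : Matrix q q K) :
    finrank K (intertwiners ((↑S⁻¹ : Matrix p p K) * M * (S : Matrix p p K)) N) =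
      finrank K (intertwiners M N) := by
  obtain ⟨T, T', hTT', hT'T⟩ := S
  change finrank K (intertwiners (T' * M * T) N) = _
  let e : Matrix p q K ≃ₗ[K] Matrix p q K :=
    .ofLinearMap (mulLeftLinearMap q K T') (mulLeftLinearMap q K T)
      (by rw [← mulLeftLinearMap_mul, hT'T, mulLeftLinearMap_one])
      (by rw [← mulLeftLinearMap_mul, hTT', mulLeftLinearMap_one])
  suffices (intertwiners M N).map e.toLinearMap = intertwiners (T' * M * T) N by
    rw [← this, LinearEquiv.finrank_map_eq]
  ext Z
  simp only [Submodule.mem_map, mem_intertwiners]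
  constructor
  · rintro ⟨Y, hY, rfl⟩
    change T' * M * T * (T' * Y) = T' * Y * N
    simp only [Matrix.mul_assoc]
    rw [← Matrix.mul_assoc T, hTT', Matrix.one_mul, hY]
  · intro hZ
    refine ⟨T * Z, ?_, ?_⟩
    · calc M * (T * Z) = T * (T' * M * T * Z) := by
            simp only [← Matrix.mul_assoc, hTT', Matrix.one_mul]
        _ = T * Z * N := by rw [hZ, Matrix.mul_assoc]
    · change T' * (T * Z) = Z
      rw [← Matrix.mul_assoc, hT'T, Matrix.one_mul]

theorem fromBlocks_one_mul_mul_fromBlocks_one [DecidableEq ι] [DecidableEq κ] (A : Matrix ι ι K)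
    (B : Matrix κ κ K) (C X : Matrix ι κ K) :
    fromBlocks 1 X 0 1 * fromBlocks A C 0 B * fromBlocks 1 (-X) 0 1 =
      fromBlocks A (C - (A * X - X * B)) 0 B := by
  simp only [fromBlocks_multiply, fromBlocks_inj]
  refine ⟨by simp, ?_, by simp, by simp⟩
  simp only [Matrix.one_mul, Matrix.mul_one, Matrix.mul_zero, Matrix.mul_neg, add_zero]
  abel

theorem exists_units_conj_eq_of_sylvester [DecidableEq ι] [DecidableEq κ] {A : Matrix ι ι K}
    {B : Matrix κ κ K} {C X : Matrix ι κ K} (hX : A * X - X * B = C) :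
    ∃ S : (Matrix (ι ⊕ κ) (ι ⊕ κ) K)ˣ,
      (↑S⁻¹ : Matrix (ι ⊕ κ) (ι ⊕ κ) K) * fromBlocks A C 0 B * S = fromBlocks A 0 0 B := by
  refine ⟨⟨fromBlocks 1 (-X) 0 1, fromBlocks 1 X 0 1, by simp [fromBlocks_multiply],
    by simp [fromBlocks_multiply]⟩, ?_⟩
  change fromBlocks 1 X 0 1 * fromBlocks A C 0 B * fromBlocks 1 (-X) 0 1 = _
  rw [fromBlocks_one_mul_mul_fromBlocks_one, hX, sub_self]

variable (K ι κ) in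
@[simps]
def bottomBlocks : Matrix (ι ⊕ κ) (ι ⊕ κ) K →ₗ[K] Matrix κ ι K × Matrix κ κ K where
  toFun Z := (Z.toBlocks₂₁, Z.toBlocks₂₂)
  map_add' _ _ := rfl
  map_smul' _ _ := rfl

theorem intertwiners_inf_ker_bottomBlocks (A : Matrix ι ι K) (B : Matrix κ κ K)
    (C C' : Matrix ι κ K) (P : Matrix (ι ⊕ κ) (ι ⊕ κ) K) :
    intertwiners (fromBlocks A C 0 B) P ⊓ LinearMap.ker (bottomBlocks K ι κ) =
      intertwiners (fromBlocks A C' 0 B) P ⊓ LinearMap.ker (bottomBlocks K ι κ) := by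
  ext Z
  simp only [Submodule.mem_inf, mem_intertwiners, LinearMap.mem_ker, bottomBlocks_apply,
    Prod.mk_eq_zero]
  refine and_congr_left fun ⟨h₂₁, h₂₂⟩ => ?_
  have hCZ : ∀ C'' : Matrix ι κ K, fromBlocks A C'' 0 B * Z =
      fromBlocks (A * Z.toBlocks₁₁) (A * Z.toBlocks₁₂) 0 0 := by
    intro C''
    rw [← fromBlocks_toBlocks Z, h₂₁, h₂₂, fromBlocks_multiply]
    simp
  rw [hCZ, hCZ]

theorem map_bottomBlocks_intertwiners_le (A : Matrix ι ι K) (B : Matrix κ κ K)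
    (C : Matrix ι κ K) (P : Matrix (ι ⊕ κ) (ι ⊕ κ) K) :
    (intertwiners (fromBlocks A C 0 B) P).map (bottomBlocks K ι κ) ≤
      (intertwiners (fromBlocks A 0 0 B) P).map (bottomBlocks K ι κ) := by
  rintro _ ⟨Z, hZ, rfl⟩
  refine ⟨fromBlocks 0 0 Z.toBlocks₂₁ Z.toBlocks₂₂, mem_intertwiners.2 ?_, by simp⟩
  replace hZ := mem_intertwiners.1 hZ
  rw [← fromBlocks_toBlocks Z, ← fromBlocks_toBlocks P] at hZ
  rw [← fromBlocks_toBlocks P]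
  simp only [fromBlocks_multiply, fromBlocks_inj] at hZ ⊢
  simp_all

theorem sylvester_of_mem_intertwiners [DecidableEq κ] {A : Matrix ι ι K} {B : Matrix κ κ K}
    {C : Matrix ι κ K} {Z : Matrix (ι ⊕ κ) (ι ⊕ κ) K}
    (hZ : Z ∈ intertwiners (fromBlocks A C 0 B) (fromBlocks A 0 0 B)) (h₂₂ : Z.toBlocks₂₂ = 1) :
    A * -Z.toBlocks₁₂ - -Z.toBlocks₁₂ * B = C := by
  rw [mem_intertwiners, ← fromBlocks_toBlocks Z, h₂₂, fromBlocks_multiply, fromBlocks_multiply,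
    fromBlocks_inj] at hZ
  obtain ⟨-, h₁₂, -, -⟩ := hZ
  simp only [Matrix.mul_one, Matrix.mul_zero, zero_add] at h₁₂
  rw [Matrix.mul_neg, Matrix.neg_mul, sub_neg_eq_add, ← h₁₂]
  abel

theorem exists_sylvester_of_units_conj_eq [DecidableEq ι] [DecidableEq κ] {A : Matrix ι ι K}
    {B : Matrix κ κ K} {C : Matrix ι κ K} {S : (Matrix (ι ⊕ κ) (ι ⊕ κ) K)ˣ}
    (hS : (↑S⁻¹ : Matrix (ι ⊕ κ) (ι ⊕ κ) K) * fromBlocks A C 0 B * S = fromBlocks A 0 0 B) :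
    ∃ X : Matrix ι κ K, A * X - X * B = C := by
  set N := fromBlocks A 0 0 B
  have hdim :
      finrank K (intertwiners (fromBlocks A C 0 B) N) = finrank K (intertwiners N N) := by
    rw [← hS, finrank_intertwiners_units_conj, hS]
  have hrange := Submodule.map_eq_of_inf_ker_eq_of_finrank_eq
    (intertwiners_inf_ker_bottomBlocks A B C 0 N) (map_bottomBlocks_intertwiners_le A B C N) hdim
  have hone : bottomBlocks K ι κ 1 ∈ (intertwiners N N).map (bottomBlocks K ι κ) :=
    Submodule.mem_map_of_mem (mem_intertwiners.2 (by rw [Matrix.one_mul, Matrix.mul_one]))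
  obtain ⟨Z, hZ, hZ1⟩ := hrange ▸ hone
  have h₂₂ : Z.toBlocks₂₂ = 1 := by simpa [← fromBlocks_one] using congrArg Prod.snd hZ1
  exact ⟨_, sylvester_of_mem_intertwiners hZ h₂₂⟩

theorem exists_sylvester_iff_exists_units_conj_eq [DecidableEq ι] [DecidableEq κ]
    (A : Matrix ι ι K) (B : Matrix κ κ K) (C : Matrix ι κ K) :
    (∃ X : Matrix ι κ K, A * X - X * B = C) ↔
      ∃ S : (Matrix (ι ⊕ κ) (ι ⊕ κ) K)ˣ,
        (↑S⁻¹ : Matrix (ι ⊕ κ) (ι ⊕ κ) K) * fromBlocks A C 0 B * S = fromBlocks A 0 0 B :=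
  ⟨fun ⟨_, hX⟩ => exists_units_conj_eq_of_sylvester hX,
    fun ⟨_, hS⟩ => exists_sylvester_of_units_conj_eq hS⟩

end Matrix

theorem stmt_5 (m n : ℕ) (A : Matrix (Fin m) (Fin m) ℝ)
    (B : Matrix (Fin n) (Fin n) ℝ) (C : Matrix (Fin m) (Fin n) ℝ) :
    (∃ X : Matrix (Fin m) (Fin n) ℝ, A * X - X * B = C) ↔
    ∃ S : (Matrix (Fin m ⊕ Fin n) (Fin m ⊕ Fin n) ℝ)ˣ,
      (↑S⁻¹ : Matrix (Fin m ⊕ Fin n) (Fin m ⊕ Fin n) ℝ) *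
        Matrix.fromBlocks A C 0 B * S = Matrix.fromBlocks A 0 0 B :=
  Matrix.exists_sylvester_iff_exists_units_conj_eq A B C
end
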